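/- Let V and Ṽ be admissible potentials on Ω (each extended by I₆ off Ω), τ>0, p ∈ ℤ, and let w, w̃ be the special solutions and v, ṽ ∈ H(Ω;ℂ⁶) the corresponding distinguished solutions built from V and Ṽ respectively. Then the following boundary values of v and ṽ coincide (i.e. do not depend on the potential inside Ω): (i) for every n ∈ ∂Ω₁⁻ and s ∈ {E,H}, v^s_tan(n) = ṽ^s_tan(n) and ∂_tan v^s(n) = ∂_tan ṽ^s(n); (ii) for every n ∈ ∂Ω₂, s ∈ {E,H} and j ≠ 2, v_j^s(n) = ṽ_j^s(n); (iii) for every n ∈ ∂Ω₃, s ∈ {E,H} and j ≠ 3, v_j^s(n) = ṽ_j^s(n). -/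
import Mathlib


/-! Common framework: discrete anisotropic Maxwell operator on a paving of ℤ³. -/

abbrev Z3 := ℤ × ℤ × ℤ
abbrev C3 := ℂ × ℂ × ℂ

def e1 : Z3 := (1, 0, 0)
def e2 : Z3 := (0, 1, 0)
def e3 : Z3 := (0, 0, 1)

/-- A family of six ℂ-valued components `u_j^{E/H}` (j = 1,2,3) on ℤ³. -/
structure Fam where
  E1 : Z3 → ℂ
  E2 : Z3 → ℂ
  E3 : Z3 → ℂ
  H1 : Z3 → ℂ
  H2 : Z3 → ℂ
  H3 : Z3 → ℂ

/-- A diagonal 6×6 complex potential `V = diag(V₁^E,V₂^E,V₃^E,V₁^H,V₂^H,V₃^H)`. -/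
structure Pot where
  E1 : Z3 → ℂ
  E2 : Z3 → ℂ
  E3 : Z3 → ℂ
  H1 : Z3 → ℂ
  H2 : Z3 → ℂ
  H3 : Z3 → ℂ

/-- `V(n)` is invertible (all diagonal entries nonzero) for `n` in the given set. -/
def PotInv (S : Set Z3) (V : Pot) : Prop :=
  ∀ n ∈ S, V.E1 n ≠ 0 ∧ V.E2 n ≠ 0 ∧ V.E3 n ≠ 0 ∧ V.H1 n ≠ 0 ∧ V.H2 n ≠ 0 ∧ V.H3 n ≠ 0

/-- `V(n) = I₆` off the given set. -/
def PotExt (S : Set Z3) (V : Pot) : Prop :=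
  ∀ n ∉ S, V.E1 n = 1 ∧ V.E2 n = 1 ∧ V.E3 n = 1 ∧ V.H1 n = 1 ∧ V.H2 n = 1 ∧ V.H3 n = 1

/-- Admissible potential on `S`, extended by the identity off `S`. -/
def PotAdm (S : Set Z3) (V : Pot) : Prop := PotInv S V ∧ PotExt S V

/-! The recursion equations (R1)–(R6) and the auxiliary equations (A1),(A2). -/

def eqR1 (V : Pot) (u : Fam) (n : Z3) : Prop :=
  u.E2 (n + e1) =
    2 * Complex.I * V.H3 n * u.H3 n + u.E1 (n + e2) - u.E1 (n - e2) + u.E2 (n - e1)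

def eqR2 (V : Pot) (u : Fam) (n : Z3) : Prop :=
  u.E3 (n + e1) =
    -(2 * Complex.I * V.H2 n * u.H2 n) + u.E1 (n + e3) - u.E1 (n - e3) + u.E3 (n - e1)

def eqR3 (V : Pot) (u : Fam) (n : Z3) : Prop :=
  u.H2 (n + e1) =
    -(2 * Complex.I * V.E3 n * u.E3 n) + u.H1 (n + e2) - u.H1 (n - e2) + u.H2 (n - e1)

def eqR4 (V : Pot) (u : Fam) (n : Z3) : Prop :=
  u.H3 (n + e1) =
    2 * Complex.I * V.E2 n * u.E2 n + u.H1 (n + e3) - u.H1 (n - e3) + u.H3 (n - e1)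

def eqR5 (V : Pot) (u : Fam) (n : Z3) : Prop :=
  u.E1 (n + e1) = (-(2 * Complex.I * V.E1 (n + e1)))⁻¹ *
    ((2 * Complex.I * V.E2 (n + e2) * u.E2 (n + e2)
        + 2 * Complex.I * V.E3 (n + e3) * u.E3 (n + e3)
        + u.H3 (n + e2 - e1) - u.H2 (n + e3 - e1))
      - (2 * Complex.I * V.E2 (n - e2) * u.E2 (n - e2)
        + 2 * Complex.I * V.E3 (n - e3) * u.E3 (n - e3)
        + u.H3 (n - e2 - e1) - u.H2 (n - e3 - e1)))

def eqR6 (V : Pot) (u : Fam) (n : Z3) : Prop :=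
  u.H1 (n + e1) = (2 * Complex.I * V.H1 (n + e1))⁻¹ *
    ((-(2 * Complex.I * V.H2 (n + e2) * u.H2 (n + e2))
        - 2 * Complex.I * V.H3 (n + e3) * u.H3 (n + e3)
        + u.E3 (n + e2 - e1) - u.E2 (n + e3 - e1))
      - (-(2 * Complex.I * V.H2 (n - e2) * u.H2 (n - e2))
        - 2 * Complex.I * V.H3 (n - e3) * u.H3 (n - e3)
        + u.E3 (n - e2 - e1) - u.E2 (n - e3 - e1)))

def eqA1 (V : Pot) (u : Fam) (n : Z3) : Prop :=
  u.E1 n = (-(2 * Complex.I * V.E1 n))⁻¹ *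
    (u.H3 (n + e2) - u.H3 (n - e2) - u.H2 (n + e3) + u.H2 (n - e3))

def eqA2 (V : Pot) (u : Fam) (n : Z3) : Prop :=
  u.H1 n = (2 * Complex.I * V.H1 n)⁻¹ *
    (u.E3 (n + e2) - u.E3 (n - e2) - u.E2 (n + e3) + u.E2 (n - e3))

/-- Equations (R1)–(R4) at `n`. -/
def ReqB (V : Pot) (u : Fam) (n : Z3) : Prop :=
  eqR1 V u n ∧ eqR2 V u n ∧ eqR3 V u n ∧ eqR4 V u n

/-- Equations (R1)–(R6) at `n`. -/
def Req (V : Pot) (u : Fam) (n : Z3) : Prop :=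
  ReqB V u n ∧ eqR5 V u n ∧ eqR6 V u n

/-! Geometry of the paving `Ω = [[1,R₁]]×[[1,R₂]]×[[1,R₃]]` (R packed as a triple). -/

def Omega (R : Z3) : Set Z3 :=
  {n | 1 ≤ n.1 ∧ n.1 ≤ R.1 ∧ 1 ≤ n.2.1 ∧ n.2.1 ≤ R.2.1 ∧ 1 ≤ n.2.2 ∧ n.2.2 ≤ R.2.2}

def bd1p (R : Z3) : Set Z3 :=
  {n | n.1 = R.1 + 1 ∧ 1 ≤ n.2.1 ∧ n.2.1 ≤ R.2.1 ∧ 1 ≤ n.2.2 ∧ n.2.2 ≤ R.2.2}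
def bd1m (R : Z3) : Set Z3 :=
  {n | n.1 = 0 ∧ 1 ≤ n.2.1 ∧ n.2.1 ≤ R.2.1 ∧ 1 ≤ n.2.2 ∧ n.2.2 ≤ R.2.2}
def bd2p (R : Z3) : Set Z3 :=
  {n | n.2.1 = R.2.1 + 1 ∧ 1 ≤ n.1 ∧ n.1 ≤ R.1 ∧ 1 ≤ n.2.2 ∧ n.2.2 ≤ R.2.2}
def bd2m (R : Z3) : Set Z3 :=
  {n | n.2.1 = 0 ∧ 1 ≤ n.1 ∧ n.1 ≤ R.1 ∧ 1 ≤ n.2.2 ∧ n.2.2 ≤ R.2.2}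
def bd3p (R : Z3) : Set Z3 :=
  {n | n.2.2 = R.2.2 + 1 ∧ 1 ≤ n.1 ∧ n.1 ≤ R.1 ∧ 1 ≤ n.2.1 ∧ n.2.1 ≤ R.2.1}
def bd3m (R : Z3) : Set Z3 :=
  {n | n.2.2 = 0 ∧ 1 ≤ n.1 ∧ n.1 ≤ R.1 ∧ 1 ≤ n.2.1 ∧ n.2.1 ≤ R.2.1}

def bd1 (R : Z3) : Set Z3 := bd1p R ∪ bd1m R
def bd2 (R : Z3) : Set Z3 := bd2p R ∪ bd2m R
def bd3 (R : Z3) : Set Z3 := bd3p R ∪ bd3m R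

/-- The boundary `∂Ω`. -/
def bd (R : Z3) : Set Z3 := bd1 R ∪ bd2 R ∪ bd3 R

/-- The outgoing normal `ν(n)` (correct on each face of `∂Ω`). -/
def nuv (R : Z3) (n : Z3) : Z3 :=
  if n.1 = 0 then (-1, 0, 0)
  else if n.1 = R.1 + 1 then (1, 0, 0)
  else if n.2.1 = 0 then (0, -1, 0)
  else if n.2.1 = R.2.1 + 1 then (0, 1, 0)
  else if n.2.2 = 0 then (0, 0, -1)
  else (0, 0, 1)

/-- The unique neighbour `m_Ω(n) ∈ Ω` of a boundary point `n`. -/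
def mOm (R : Z3) (n : Z3) : Z3 := n - nuv R n

/-! ℂ³ operations against integer vectors. -/

noncomputable def zdot (a : C3) (b : Z3) : ℂ :=
  a.1 * (b.1 : ℂ) + a.2.1 * (b.2.1 : ℂ) + a.2.2 * (b.2.2 : ℂ)

noncomputable def zsmul (c : ℂ) (b : Z3) : C3 :=
  (c * (b.1 : ℂ), c * (b.2.1 : ℂ), c * (b.2.2 : ℂ))

/-- Cross product `a ∧ b` of a ℂ³ vector with an integer vector. -/
noncomputable def zcross (a : C3) (b : Z3) : C3 :=
  (a.2.1 * (b.2.2 : ℂ) - a.2.2 * (b.2.1 : ℂ),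
   a.2.2 * (b.1 : ℂ) - a.1 * (b.2.2 : ℂ),
   a.1 * (b.2.1 : ℂ) - a.2.1 * (b.1 : ℂ))

def vecE (u : Fam) (n : Z3) : C3 := (u.E1 n, u.E2 n, u.E3 n)
def vecH (u : Fam) (n : Z3) : C3 := (u.H1 n, u.H2 n, u.H3 n)

/-- Tangential trace `u^E_tan(n)` at a boundary point. -/
noncomputable def tanE (R : Z3) (u : Fam) (n : Z3) : C3 :=
  vecE u n - zsmul (zdot (vecE u n) (nuv R n)) (nuv R n)

noncomputable def tanH (R : Z3) (u : Fam) (n : Z3) : C3 :=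
  vecH u n - zsmul (zdot (vecH u n) (nuv R n)) (nuv R n)

/-- Tangential derivative `∂_tan u^E(n) = (u(n) − u(m_Ω(n))) ∧ ν(n)`. -/
noncomputable def dtanE (R : Z3) (u : Fam) (n : Z3) : C3 :=
  zcross (vecE u n - vecE u (mOm R n)) (nuv R n)

noncomputable def dtanH (R : Z3) (u : Fam) (n : Z3) : C3 :=
  zcross (vecH u n - vecH u (mOm R n)) (nuv R n)

/-- The discrete rotational `M v = (2i)⁻¹ ∇ₘ × v`. -/
noncomputable def Mcurl (v1 v2 v3 : Z3 → ℂ) (n : Z3) : C3 :=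
  ((2 * Complex.I)⁻¹ * (-(v2 (n + e3) - v2 (n - e3)) + (v3 (n + e2) - v3 (n - e2))),
   (2 * Complex.I)⁻¹ * ((v1 (n + e3) - v1 (n - e3)) - (v3 (n + e1) - v3 (n - e1))),
   (2 * Complex.I)⁻¹ * (-(v1 (n + e2) - v1 (n - e2)) + (v2 (n + e1) - v2 (n - e1))))

/-- `u` solves the Maxwell system with potential `V` at `n`:
`M u^E = V^H u^H` and `M u^H = −V^E u^E`. -/
noncomputable def MaxwellAt (V : Pot) (u : Fam) (n : Z3) : Prop :=
  Mcurl u.E1 u.E2 u.E3 n = (V.H1 n * u.H1 n, V.H2 n * u.H2 n, V.H3 n * u.H3 n) ∧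
  Mcurl u.H1 u.H2 u.H3 n = (-(V.E1 n * u.E1 n), -(V.E2 n * u.E2 n), -(V.E3 n * u.E3 n))

/-! Membership in `H(Ω;ℂ⁶)`: components modelled as total functions; equality as
elements of `H(Ω;ℂ⁶)` is agreement of the `j`-th components on `Ω ∪ ⋃_{k≠j} ∂Ω_k`. -/

def dom1 (R : Z3) : Set Z3 := Omega R ∪ bd2 R ∪ bd3 R
def dom2 (R : Z3) : Set Z3 := Omega R ∪ bd1 R ∪ bd3 R
def dom3 (R : Z3) : Set Z3 := Omega R ∪ bd1 R ∪ bd2 R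

/-- `u = u'` as elements of `H(Ω;ℂ⁶)`. -/
def EqOnH (R : Z3) (u u' : Fam) : Prop :=
  (∀ n ∈ dom1 R, u.E1 n = u'.E1 n ∧ u.H1 n = u'.H1 n) ∧
  (∀ n ∈ dom2 R, u.E2 n = u'.E2 n ∧ u.H2 n = u'.H2 n) ∧
  (∀ n ∈ dom3 R, u.E3 n = u'.E3 n ∧ u.H3 n = u'.H3 n)

/-- Admissibility of boundary data on `Γ`: `f(n)·ν(n) = 0` on `Γ`. -/
noncomputable def AdmOn (R : Z3) (Γ : Set Z3) (f : Z3 → C3) : Prop :=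
  ∀ n ∈ Γ, zdot (f n) (nuv R n) = 0

/-! Cones and half-spaces. -/

def Cminus (N : Z3) : Set Z3 := {m | m.1 ≤ N.1 - |N.2.1 - m.2.1| - |N.2.2 - m.2.2|}
def Cplus (N : Z3) : Set Z3 := {m | N.1 + |N.2.1 - m.2.1| + |N.2.2 - m.2.2| ≤ m.1}
def Eminus (p : ℤ) : Set Z3 := {n | n.1 + n.2.1 < p}
def Eplus (p : ℤ) : Set Z3 := {n | p < n.1 + n.2.1}
def Ezero (p : ℤ) : Set Z3 := {n | n.1 + n.2.1 = p}

/-- `m'` is a lattice neighbour of `m`. -/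
def adj (m m' : Z3) : Prop :=
  m' = m + e1 ∨ m' = m - e1 ∨ m' = m + e2 ∨ m' = m - e2 ∨ m' = m + e3 ∨ m' = m - e3

/-! The special solution data. -/

/-- `ph τ p n = i^{n₃} e^{τ n₃} δ_p(n₂)`. -/
noncomputable def ph (τ : ℝ) (p : ℤ) (n : Z3) : ℂ :=
  Complex.I ^ n.2.2 * (Real.exp (τ * (n.2.2 : ℝ)) : ℂ) * (if n.2.1 = p then 1 else 0)

/-- `w` is the special solution associated with `V`, `τ`, `p`. -/
def SpecialSol (V : Pot) (τ : ℝ) (p : ℤ) (w : Fam) : Prop :=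
  (∀ n : Z3, n.1 = -1 → w.E2 n = 0 ∧ w.E3 n = 0 ∧ w.H2 n = 0 ∧ w.H3 n = 0) ∧
  (∀ n : Z3, n.1 = 0 →
      w.H1 n = ph τ p n ∧ w.H2 n = -ph τ p n ∧ w.E1 n = -ph τ p n ∧ w.E2 n = ph τ p n ∧
      w.E3 n = 0 ∧ w.H3 n = 0) ∧
  (∀ n : Z3, 0 ≤ n.1 → Req V w n)

/-- `A^s(n₁,p,n₃) = ∏_{j=-1}^{n₁} V₂^s(j-1,p-j+1,n₃) / V₁^s(j,p-j,n₃)`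
(the empty product, `= 1`, for `n₁ ≤ -2`). -/
noncomputable def Afun (V2 V1 : Z3 → ℂ) (p n1 n3 : ℤ) : ℂ :=
  ∏ j ∈ Finset.Icc (-1 : ℤ) n1, V2 (j - 1, p - j + 1, n3) / V1 (j, p - j, n3)

/-- `K^s_τ(n₁,p,n₃) = A^s(n₁,p,n₃+1) + e^{-2τ} A^s(n₁,p,n₃-1)`. -/
noncomputable def Kfun (V2 V1 : Z3 → ℂ) (τ : ℝ) (p n1 n3 : ℤ) : ℂ :=
  Afun V2 V1 p n1 (n3 + 1) + (Real.exp (-2 * τ) : ℂ) * Afun V2 V1 p n1 (n3 - 1)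

/-! Statement 19 (Lemma 3.1): the indicated boundary values of the distinguished
solution `v = v(·;p)` do not depend on the potential inside `Ω`. -/

/-- `v` is the distinguished solution built from the potential `V` and the special
solution `w`: it solves the Maxwell system with potential `V` in `Ω`, has the same
Dirichlet and Neumann data as `w` on `∂Ω₁⁻`, matches `w₁` on `∂Ω₂⁺ ∩ E₀(p)` and
`w₃` on `∂Ω₂⁺ ∩ E₀(p+1)`, and has all of its other tangential boundary components
on `∂Ω ∖ ∂Ω₁⁺` equal to `0`. -/
noncomputable def DistSol (R : Z3) (V : Pot) (p : ℤ) (w v : Fam) : Prop :=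
  (∀ n ∈ Omega R, MaxwellAt V v n) ∧
  (∀ n ∈ bd1m R,
      tanE R v n = tanE R w n ∧ tanH R v n = tanH R w n ∧
      dtanE R v n = dtanE R w n ∧ dtanH R v n = dtanH R w n) ∧
  (∀ n ∈ bd2p R ∩ Ezero p, v.E1 n = w.E1 n ∧ v.H1 n = w.H1 n) ∧
  (∀ n ∈ bd2p R ∩ Ezero (p + 1), v.E3 n = w.E3 n ∧ v.H3 n = w.H3 n) ∧
  (∀ n ∈ bd2p R, n ∉ Ezero p → v.E1 n = 0 ∧ v.H1 n = 0) ∧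
  (∀ n ∈ bd2p R, n ∉ Ezero (p + 1) → v.E3 n = 0 ∧ v.H3 n = 0) ∧
  (∀ n ∈ bd2m R, v.E1 n = 0 ∧ v.E3 n = 0 ∧ v.H1 n = 0 ∧ v.H3 n = 0) ∧
  (∀ n ∈ bd3 R, v.E1 n = 0 ∧ v.E2 n = 0 ∧ v.H1 n = 0 ∧ v.H2 n = 0)

lemma notOmega_b {R : Z3} {a b c : ℤ} (h : R.2.1 < b) : ((a,b,c) : Z3) ∉ Omega R := by
  intro hm
  simp only [Omega, Set.mem_setOf_eq] at hm
  omega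

lemma notOmega_a {R : Z3} {a b c : ℤ} (h : a < 1) : ((a,b,c) : Z3) ∉ Omega R := by
  intro hm
  simp only [Omega, Set.mem_setOf_eq] at hm
  omega

lemma Req_coords (V : Pot) (u : Fam) (a b c : ℤ) (h : Req V u (a,b,c)) :
    (u.E2 (a+1,b,c) = 2*Complex.I*V.H3 (a,b,c)*u.H3 (a,b,c) + u.E1 (a,b+1,c) - u.E1 (a,b-1,c) + u.E2 (a-1,b,c)) ∧
    (u.E3 (a+1,b,c) = -(2*Complex.I*V.H2 (a,b,c)*u.H2 (a,b,c)) + u.E1 (a,b,c+1) - u.E1 (a,b,c-1) + u.E3 (a-1,b,c)) ∧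
    (u.H2 (a+1,b,c) = -(2*Complex.I*V.E3 (a,b,c)*u.E3 (a,b,c)) + u.H1 (a,b+1,c) - u.H1 (a,b-1,c) + u.H2 (a-1,b,c)) ∧
    (u.H3 (a+1,b,c) = 2*Complex.I*V.E2 (a,b,c)*u.E2 (a,b,c) + u.H1 (a,b,c+1) - u.H1 (a,b,c-1) + u.H3 (a-1,b,c)) ∧
    (u.E1 (a+1,b,c) = (-(2*Complex.I*V.E1 (a+1,b,c)))⁻¹ *
      ((2*Complex.I*V.E2 (a,b+1,c)*u.E2 (a,b+1,c) + 2*Complex.I*V.E3 (a,b,c+1)*u.E3 (a,b,c+1)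
        + u.H3 (a-1,b+1,c) - u.H2 (a-1,b,c+1))
       - (2*Complex.I*V.E2 (a,b-1,c)*u.E2 (a,b-1,c) + 2*Complex.I*V.E3 (a,b,c-1)*u.E3 (a,b,c-1)
        + u.H3 (a-1,b-1,c) - u.H2 (a-1,b,c-1)))) ∧
    (u.H1 (a+1,b,c) = (2*Complex.I*V.H1 (a+1,b,c))⁻¹ *
      ((-(2*Complex.I*V.H2 (a,b+1,c)*u.H2 (a,b+1,c)) - 2*Complex.I*V.H3 (a,b,c+1)*u.H3 (a,b,c+1)
        + u.E3 (a-1,b+1,c) - u.E2 (a-1,b,c+1))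
       - (-(2*Complex.I*V.H2 (a,b-1,c)*u.H2 (a,b-1,c)) - 2*Complex.I*V.H3 (a,b,c-1)*u.H3 (a,b,c-1)
        + u.E3 (a-1,b-1,c) - u.E2 (a-1,b,c-1)))) := by
  obtain ⟨⟨h1, h2, h3, h4⟩, h5, h6⟩ := h
  simp only [eqR1, eqR2, eqR3, eqR4, eqR5, eqR6, e1, e2, e3, Prod.mk_add_mk, Prod.mk_sub_mk,
    add_zero, sub_zero] at h1 h2 h3 h4 h5 h6
  exact ⟨h1, h2, h3, h4, h5, h6⟩
lemma vanish {V : Pot} {τ : ℝ} {p : ℤ} {w : Fam} (hw : SpecialSol V τ p w) :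
    ∀ k b c : ℤ, -1 ≤ k → k + b < p →
      w.E2 (k,b,c) = 0 ∧ w.E3 (k,b,c) = 0 ∧ w.H2 (k,b,c) = 0 ∧ w.H3 (k,b,c) = 0 ∧
      (0 ≤ k → w.E1 (k,b,c) = 0 ∧ w.H1 (k,b,c) = 0) := by
  obtain ⟨hinit1, hinit0, hreq⟩ := hw
  suffices main : ∀ k : ℤ, -1 ≤ k → ∀ j b c : ℤ, -1 ≤ j → j ≤ k → j + b < p →
      w.E2 (j,b,c) = 0 ∧ w.E3 (j,b,c) = 0 ∧ w.H2 (j,b,c) = 0 ∧ w.H3 (j,b,c) = 0 ∧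
      (0 ≤ j → w.E1 (j,b,c) = 0 ∧ w.H1 (j,b,c) = 0) by
    intro k b c hk hlt
    exact main k hk k b c hk le_rfl hlt
  refine Int.le_induction ?_ ?_
  · intro j b c hj1 hj2 hlt
    have hj : j = -1 := le_antisymm hj2 hj1
    subst hj
    obtain ⟨a1, a2, a3, a4⟩ := hinit1 (-1,b,c) rfl
    exact ⟨a1, a2, a3, a4, fun h => absurd h (by norm_num)⟩
  · intro k hk ih
    intro j b c hj1 hj2 hlt
    rcases lt_or_eq_of_le hj2 with hlt2 | heq
    · exact ih j b c hj1 (by omega) hlt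
    · subst heq
      by_cases h0 : k + 1 = 0
      · rw [h0]
        have hb : ¬ (b = p) := by omega
        have hph : ph τ p ((0:ℤ),b,c) = 0 := by
          unfold ph
          rw [if_neg hb]
          ring
        obtain ⟨g1, g2, g3, g4, g5, g6⟩ := hinit0 (0,b,c) rfl
        refine ⟨?_, ?_, ?_, ?_, fun _ => ⟨?_, ?_⟩⟩
        · rw [g4, hph]
        · exact g5
        · rw [g2, hph]; ring
        · exact g6
        · rw [g3, hph]; ring
        · rw [g1, hph]
      · have hk0 : (0:ℤ) ≤ k := by omega
        have hreqc := Req_coords V w k b c (hreq (k,b,c) hk0)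
        have A0 := ih k b c (by omega) le_rfl (by omega)
        have A1 := ih k (b+1) c (by omega) le_rfl (by omega)
        have A2 := ih k (b-1) c (by omega) le_rfl (by omega)
        have A3 := ih k b (c+1) (by omega) le_rfl (by omega)
        have A4 := ih k b (c-1) (by omega) le_rfl (by omega)
        have B0 := ih (k-1) b c (by omega) (by omega) (by omega)
        have B1 := ih (k-1) (b+1) c (by omega) (by omega) (by omega)
        have B2 := ih (k-1) (b-1) c (by omega) (by omega) (by omega)
        have B3 := ih (k-1) b (c+1) (by omega) (by omega) (by omega)
        have B4 := ih (k-1) b (c-1) (by omega) (by omega) (by omega)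
        refine ⟨?_, ?_, ?_, ?_, fun _ => ⟨?_, ?_⟩⟩
        · rw [hreqc.1, A0.2.2.2.1, (A1.2.2.2.2 hk0).1, (A2.2.2.2.2 hk0).1, B0.1]; ring
        · rw [hreqc.2.1, A0.2.2.1, (A3.2.2.2.2 hk0).1, (A4.2.2.2.2 hk0).1, B0.2.1]; ring
        · rw [hreqc.2.2.1, A0.2.1, (A1.2.2.2.2 hk0).2, (A2.2.2.2.2 hk0).2, B0.2.2.1]; ring
        · rw [hreqc.2.2.2.1, A0.1, (A3.2.2.2.2 hk0).2, (A4.2.2.2.2 hk0).2, B0.2.2.2.1]; ring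
        · rw [hreqc.2.2.2.2.1, A1.1, A2.1, A3.2.1, A4.2.1, B1.2.2.2.1, B3.2.2.1,
            B2.2.2.2.1, B4.2.2.1]; ring
        · rw [hreqc.2.2.2.2.2, A1.2.2.1, A2.2.2.1, A3.2.2.2.1, A4.2.2.2.1, B1.2.1, B2.2.1,
            B3.1, B4.1]; ring
lemma diag {R : Z3} {V V' : Pot} (hVe : PotExt (Omega R) V) (hVe' : PotExt (Omega R) V')
    {τ : ℝ} {p : ℤ} {w w' : Fam} (hw : SpecialSol V τ p w) (hw' : SpecialSol V' τ p w') :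
    ∀ k : ℤ, 0 ≤ k → ∀ b c : ℤ, k + b = p → R.2.1 + 1 ≤ b →
      w.E1 (k,b,c) = w'.E1 (k,b,c) ∧ w.H1 (k,b,c) = w'.H1 (k,b,c) ∧
      w.E2 (k,b,c) = w'.E2 (k,b,c) ∧ w.H2 (k,b,c) = w'.H2 (k,b,c) ∧
      w.E3 (k,b,c) = 0 ∧ w'.E3 (k,b,c) = 0 ∧ w.H3 (k,b,c) = 0 ∧ w'.H3 (k,b,c) = 0 := by
  refine Int.le_induction ?_ ?_
  · intro b c hb hRb
    obtain ⟨g1, g2, g3, g4, g5, g6⟩ := hw.2.1 (0,b,c) rfl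
    obtain ⟨g1', g2', g3', g4', g5', g6'⟩ := hw'.2.1 (0,b,c) rfl
    exact ⟨by rw [g3, g3'], by rw [g1, g1'], by rw [g4, g4'], by rw [g2, g2'], g5, g5', g6, g6'⟩
  · intro k hk ih b c hb hRb
    have h1 := Req_coords V w k b c (hw.2.2 (k,b,c) hk)
    have h1' := Req_coords V' w' k b c (hw'.2.2 (k,b,c) hk)
    have IH := ih (b+1) c (by omega) (by omega)
    have Z0 := vanish hw k b c (by omega) (by omega)
    have Z0' := vanish hw' k b c (by omega) (by omega)
    have Zm := vanish hw k (b-1) c (by omega) (by omega)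
    have Zm' := vanish hw' k (b-1) c (by omega) (by omega)
    have Zc1 := vanish hw k b (c+1) (by omega) (by omega)
    have Zc1' := vanish hw' k b (c+1) (by omega) (by omega)
    have Zc2 := vanish hw k b (c-1) (by omega) (by omega)
    have Zc2' := vanish hw' k b (c-1) (by omega) (by omega)
    have Y0 := vanish hw (k-1) b c (by omega) (by omega)
    have Y0' := vanish hw' (k-1) b c (by omega) (by omega)
    have Yp := vanish hw (k-1) (b+1) c (by omega) (by omega)
    have Yp' := vanish hw' (k-1) (b+1) c (by omega) (by omega)
    have Ym := vanish hw (k-1) (b-1) c (by omega) (by omega)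
    have Ym' := vanish hw' (k-1) (b-1) c (by omega) (by omega)
    have Yc1 := vanish hw (k-1) b (c+1) (by omega) (by omega)
    have Yc1' := vanish hw' (k-1) b (c+1) (by omega) (by omega)
    have Yc2 := vanish hw (k-1) b (c-1) (by omega) (by omega)
    have Yc2' := vanish hw' (k-1) b (c-1) (by omega) (by omega)
    have hv1 := hVe (k+1,b,c) (notOmega_b (by omega))
    have hv1' := hVe' (k+1,b,c) (notOmega_b (by omega))
    have hv2 := hVe (k,b+1,c) (notOmega_b (by omega))
    have hv2' := hVe' (k,b+1,c) (notOmega_b (by omega))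
    refine ⟨?_, ?_, ?_, ?_, ?_, ?_, ?_, ?_⟩
    · rw [h1.2.2.2.2.1, h1'.2.2.2.2.1, hv1.1, hv1'.1, hv2.2.1, hv2'.2.1, IH.2.2.1,
        Zc1.2.1, Zc1'.2.1, Zc2.2.1, Zc2'.2.1, Yp.2.2.2.1, Yp'.2.2.2.1, Yc1.2.2.1, Yc1'.2.2.1,
        Zm.1, Zm'.1, Ym.2.2.2.1, Ym'.2.2.2.1, Yc2.2.2.1, Yc2'.2.2.1]
      ring
    · rw [h1.2.2.2.2.2, h1'.2.2.2.2.2, hv1.2.2.2.1, hv1'.2.2.2.1, hv2.2.2.2.2.1, hv2'.2.2.2.2.1,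
        IH.2.2.2.1, Zc1.2.2.2.1, Zc1'.2.2.2.1, Zc2.2.2.2.1, Zc2'.2.2.2.1, Yp.2.1, Yp'.2.1,
        Yc1.1, Yc1'.1, Zm.2.2.1, Zm'.2.2.1, Ym.2.1, Ym'.2.1, Yc2.1, Yc2'.1]
      ring
    · rw [h1.1, h1'.1, Z0.2.2.2.1, Z0'.2.2.2.1, IH.1, (Zm.2.2.2.2 hk).1, (Zm'.2.2.2.2 hk).1,
        Y0.1, Y0'.1]
      ring
    · rw [h1.2.2.1, h1'.2.2.1, Z0.2.1, Z0'.2.1, IH.2.1, (Zm.2.2.2.2 hk).2, (Zm'.2.2.2.2 hk).2,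
        Y0.2.2.1, Y0'.2.2.1]
      ring
    · rw [h1.2.1, Z0.2.2.1, (Zc1.2.2.2.2 hk).1, (Zc2.2.2.2.2 hk).1, Y0.2.1]; ring
    · rw [h1'.2.1, Z0'.2.2.1, (Zc1'.2.2.2.2 hk).1, (Zc2'.2.2.2.2 hk).1, Y0'.2.1]; ring
    · rw [h1.2.2.2.1, Z0.1, (Zc1.2.2.2.2 hk).2, (Zc2.2.2.2.2 hk).2, Y0.2.2.2.1]; ring
    · rw [h1'.2.2.2.1, Z0'.1, (Zc1'.2.2.2.2 hk).2, (Zc2'.2.2.2.2 hk).2, Y0'.2.2.2.1]; ring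
lemma antidiag {R : Z3} {V V' : Pot} (hVe : PotExt (Omega R) V) (hVe' : PotExt (Omega R) V')
    {τ : ℝ} {p : ℤ} {w w' : Fam} (hw : SpecialSol V τ p w) (hw' : SpecialSol V' τ p w') :
    ∀ k b c : ℤ, 1 ≤ k → k + b = p + 1 → R.2.1 + 1 ≤ b →
      w.E3 (k,b,c) = w'.E3 (k,b,c) ∧ w.H3 (k,b,c) = w'.H3 (k,b,c) := by
  intro k b c hk hb hRb
  have h1 := Req_coords V w (k-1) b c (hw.2.2 (k-1,b,c) (by omega : (0:ℤ) ≤ k-1))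
  have h1' := Req_coords V' w' (k-1) b c (hw'.2.2 (k-1,b,c) (by omega : (0:ℤ) ≤ k-1))
  have e : (k-1) + 1 = k := by ring
  rw [e] at h1 h1'
  have D0 := diag hVe hVe' hw hw' (k-1) (by omega) b c (by omega) hRb
  have Dc1 := diag hVe hVe' hw hw' (k-1) (by omega) b (c+1) (by omega) hRb
  have Dc2 := diag hVe hVe' hw hw' (k-1) (by omega) b (c-1) (by omega) hRb
  have Y := vanish hw (k-2) b c (by omega) (by omega)
  have Y' := vanish hw' (k-2) b c (by omega) (by omega)
  have e2 : (k-1) - 1 = k - 2 := by ring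
  rw [e2] at h1 h1'
  have hvm := hVe (k-1,b,c) (notOmega_b (by omega))
  have hvm' := hVe' (k-1,b,c) (notOmega_b (by omega))
  constructor
  · rw [h1.2.1, h1'.2.1, hvm.2.2.2.2.1, hvm'.2.2.2.2.1, D0.2.2.2.1, Dc1.1, Dc2.1,
      Y.2.1, Y'.2.1]
  · rw [h1.2.2.2.1, h1'.2.2.2.1, hvm.2.1, hvm'.2.1, D0.2.2.1, Dc1.2.1, Dc2.2.1,
      Y.2.2.2.1, Y'.2.2.2.1]

lemma level1 {R : Z3} {V V' : Pot} (hVe : PotExt (Omega R) V) (hVe' : PotExt (Omega R) V')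
    {τ : ℝ} {p : ℤ} {w w' : Fam} (hw : SpecialSol V τ p w) (hw' : SpecialSol V' τ p w')
    (b c : ℤ) :
    w.E2 (1,b,c) = w'.E2 (1,b,c) ∧ w.E3 (1,b,c) = w'.E3 (1,b,c) ∧
    w.H2 (1,b,c) = w'.H2 (1,b,c) ∧ w.H3 (1,b,c) = w'.H3 (1,b,c) := by
  have h1 := Req_coords V w 0 b c (hw.2.2 (0,b,c) le_rfl)
  have h1' := Req_coords V' w' 0 b c (hw'.2.2 (0,b,c) le_rfl)
  have e : (0:ℤ) + 1 = 1 := by norm_num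
  have e2 : (0:ℤ) - 1 = -1 := by norm_num
  rw [e, e2] at h1 h1'
  have g := hw.2.1 (0,b,c) rfl
  have g' := hw'.2.1 (0,b,c) rfl
  have gp1 := hw.2.1 (0,b+1,c) rfl
  have gp1' := hw'.2.1 (0,b+1,c) rfl
  have gm1 := hw.2.1 (0,b-1,c) rfl
  have gm1' := hw'.2.1 (0,b-1,c) rfl
  have gc1 := hw.2.1 (0,b,c+1) rfl
  have gc1' := hw'.2.1 (0,b,c+1) rfl
  have gc2 := hw.2.1 (0,b,c-1) rfl
  have gc2' := hw'.2.1 (0,b,c-1) rfl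
  have i := hw.1 (-1,b,c) rfl
  have i' := hw'.1 (-1,b,c) rfl
  have hv0 := hVe (0,b,c) (notOmega_a (by norm_num))
  have hv0' := hVe' (0,b,c) (notOmega_a (by norm_num))
  refine ⟨?_, ?_, ?_, ?_⟩
  · rw [h1.1, h1'.1, g.2.2.2.2.2, g'.2.2.2.2.2, gp1.2.2.1, gp1'.2.2.1, gm1.2.2.1, gm1'.2.2.1,
      i.1, i'.1]
    ring
  · rw [h1.2.1, h1'.2.1, hv0.2.2.2.2.1, hv0'.2.2.2.2.1, g.2.1, g'.2.1, gc1.2.2.1, gc1'.2.2.1,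
      gc2.2.2.1, gc2'.2.2.1, i.2.1, i'.2.1]
  · rw [h1.2.2.1, h1'.2.2.1, g.2.2.2.2.1, g'.2.2.2.2.1, gp1.1, gp1'.1, gm1.1, gm1'.1,
      i.2.2.1, i'.2.2.1]
    ring
  · rw [h1.2.2.2.1, h1'.2.2.2.1, hv0.2.1, hv0'.2.1, g.2.2.2.1, g'.2.2.2.1, gc1.1, gc1'.1,
      gc2.1, gc2'.1, i.2.2.2, i'.2.2.2]

lemma zcross_neg_e1 (a : C3) : zcross a ((-1,0,0) : Z3) = (0, -a.2.2, a.2.1) := by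
  unfold zcross
  push_cast
  refine Prod.ext ?_ (Prod.ext ?_ ?_) <;> simp
theorem statement19 (R : Z3) (hR : 1 ≤ R.1 ∧ 1 ≤ R.2.1 ∧ 1 ≤ R.2.2)
    (V V' : Pot) (hV : PotAdm (Omega R) V) (hV' : PotAdm (Omega R) V')
    (τ : ℝ) (hτ : 0 < τ) (p : ℤ)
    (w w' : Fam) (hw : SpecialSol V τ p w) (hw' : SpecialSol V' τ p w')
    (v v' : Fam) (hv : DistSol R V p w v) (hv' : DistSol R V' p w' v') :
    -- (i) Dirichlet and Neumann traces on `∂Ω₁⁻` coincide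
    (∀ n ∈ bd1m R,
      tanE R v n = tanE R v' n ∧ tanH R v n = tanH R v' n ∧
      dtanE R v n = dtanE R v' n ∧ dtanH R v n = dtanH R v' n) ∧
    -- (ii) the components `j ≠ 2` coincide on `∂Ω₂`
    (∀ n ∈ bd2 R,
      v.E1 n = v'.E1 n ∧ v.E3 n = v'.E3 n ∧ v.H1 n = v'.H1 n ∧ v.H3 n = v'.H3 n) ∧
    -- (iii) the components `j ≠ 3` coincide on `∂Ω₃`
    (∀ n ∈ bd3 R,
      v.E1 n = v'.E1 n ∧ v.E2 n = v'.E2 n ∧ v.H1 n = v'.H1 n ∧ v.H2 n = v'.H2 n) := by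
  refine ⟨?_, ?_, ?_⟩
  · -- (i)
    intro n hn
    obtain ⟨a, b, c⟩ := n
    have hnn := hn
    simp only [bd1m, Set.mem_setOf_eq] at hnn
    obtain ⟨ha, -, -, -, -⟩ := hnn
    have ha' : a = 0 := ha
    subst ha'
    have T := hv.2.1 (0,b,c) hn
    have T' := hv'.2.1 (0,b,c) hn
    have g := hw.2.1 (0,b,c) rfl
    have g' := hw'.2.1 (0,b,c) rfl
    have L := level1 hV.2 hV'.2 hw hw' b c
    have hvecE : vecE w (0,b,c) = vecE w' (0,b,c) := by
      unfold vecE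
      rw [g.2.2.1, g.2.2.2.1, g.2.2.2.2.1, g'.2.2.1, g'.2.2.2.1, g'.2.2.2.2.1]
    have hvecH : vecH w (0,b,c) = vecH w' (0,b,c) := by
      unfold vecH
      rw [g.1, g.2.1, g.2.2.2.2.2, g'.1, g'.2.1, g'.2.2.2.2.2]
    have hnu : nuv R ((0:ℤ),b,c) = (-1,0,0) := by unfold nuv; simp
    have hmo : mOm R ((0:ℤ),b,c) = (1,b,c) := by
      unfold mOm
      rw [hnu]
      simp [Prod.ext_iff]
    refine ⟨?_, ?_, ?_, ?_⟩
    · rw [T.1, T'.1]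
      unfold tanE
      rw [hvecE]
    · rw [T.2.1, T'.2.1]
      unfold tanH
      rw [hvecH]
    · rw [T.2.2.1, T'.2.2.1]
      unfold dtanE
      rw [hnu, hmo]
      simp only [zcross_neg_e1, vecE, Prod.mk_sub_mk, Prod.mk.injEq]
      refine ⟨trivial, ?_, ?_⟩
      · rw [g.2.2.2.2.1, g'.2.2.2.2.1, L.2.1]
      · rw [g.2.2.2.1, g'.2.2.2.1, L.1]
    · rw [T.2.2.2, T'.2.2.2]
      unfold dtanH
      rw [hnu, hmo]
      simp only [zcross_neg_e1, vecH, Prod.mk_sub_mk, Prod.mk.injEq]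
      refine ⟨trivial, ?_, ?_⟩
      · rw [g.2.2.2.2.2, g'.2.2.2.2.2, L.2.2.2]
      · rw [g.2.1, g'.2.1, L.2.2.1]
  · -- (ii)
    intro n hn
    obtain ⟨a, b, c⟩ := n
    rcases hn with hn | hn
    · -- bd2p
      have hnn := hn
      simp only [bd2p, Set.mem_setOf_eq] at hnn
      obtain ⟨hb, ha1, ha2, hc1, hc2⟩ := hnn
      have hb' : b = R.2.1 + 1 := hb
      have ha1' : 1 ≤ a := ha1
      refine ⟨?_, ?_, ?_, ?_⟩
      · by_cases hz : ((a,b,c) : Z3) ∈ Ezero p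
        · have hz0 : a + b = p := hz
          rw [(hv.2.2.1 _ ⟨hn, hz⟩).1, (hv'.2.2.1 _ ⟨hn, hz⟩).1]
          exact (diag hV.2 hV'.2 hw hw' a (by omega) b c hz0 (by omega)).1
        · rw [(hv.2.2.2.2.1 _ hn hz).1, (hv'.2.2.2.2.1 _ hn hz).1]
      · by_cases hz : ((a,b,c) : Z3) ∈ Ezero (p+1)
        · have hz0 : a + b = p + 1 := hz
          rw [(hv.2.2.2.1 _ ⟨hn, hz⟩).1, (hv'.2.2.2.1 _ ⟨hn, hz⟩).1]
          exact (antidiag hV.2 hV'.2 hw hw' a b c (by omega) hz0 (by omega)).1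
        · rw [(hv.2.2.2.2.2.1 _ hn hz).1, (hv'.2.2.2.2.2.1 _ hn hz).1]
      · by_cases hz : ((a,b,c) : Z3) ∈ Ezero p
        · have hz0 : a + b = p := hz
          rw [(hv.2.2.1 _ ⟨hn, hz⟩).2, (hv'.2.2.1 _ ⟨hn, hz⟩).2]
          exact (diag hV.2 hV'.2 hw hw' a (by omega) b c hz0 (by omega)).2.1
        · rw [(hv.2.2.2.2.1 _ hn hz).2, (hv'.2.2.2.2.1 _ hn hz).2]
      · by_cases hz : ((a,b,c) : Z3) ∈ Ezero (p+1)
        · have hz0 : a + b = p + 1 := hz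
          rw [(hv.2.2.2.1 _ ⟨hn, hz⟩).2, (hv'.2.2.2.1 _ ⟨hn, hz⟩).2]
          exact (antidiag hV.2 hV'.2 hw hw' a b c (by omega) hz0 (by omega)).2
        · rw [(hv.2.2.2.2.2.1 _ hn hz).2, (hv'.2.2.2.2.2.1 _ hn hz).2]
    · -- bd2m
      have T := hv.2.2.2.2.2.2.1 (a,b,c) hn
      have T' := hv'.2.2.2.2.2.2.1 (a,b,c) hn
      exact ⟨by rw [T.1, T'.1], by rw [T.2.1, T'.2.1], by rw [T.2.2.1, T'.2.2.1],
        by rw [T.2.2.2, T'.2.2.2]⟩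
  · -- (iii)
    intro n hn
    have T := hv.2.2.2.2.2.2.2 n hn
    have T' := hv'.2.2.2.2.2.2.2 n hn
    exact ⟨by rw [T.1, T'.1], by rw [T.2.1, T'.2.1], by rw [T.2.2.1, T'.2.2.1],
      by rw [T.2.2.2, T'.2.2.2]⟩
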